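/- arXiv:2306.10991 — 2 statements merged into one kernel-verified Lean document; each statement's English description precedes it below -/
import Mathlib

section
/- For $r \geq 0$ defined by $h(r) = \sum (-1)^{b_1} \prod_{i=1}^{r+1} s(i)^{b_i} \frac{(r-b_1)!}{b_2!\cdots b_{r+1}!}$ (sum over non-negative integer solutions of $\sum i\,b_i = 2r$, $\sum b_i = r$), one has $h(0) = 1$, and for every $\ell \geq 0$ the recurrence $\sum_{i=0}^{\ell} (-1)^i \frac{s(\ell-i+2)}{s(1)^{i+1}} h(i) = \frac{(-1)^{\ell}}{s(1)^{\ell+1}} h(\ell+1)$ holds. -/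
/-!
In a summand of `hFun s r` write `x = b 0` for the number of parts equal to `1` and
`c k = b (k + 1)` for the number of parts equal to `k + 2`. The two constraints say
`x + ∑ c = r` and `∑ (k + 1) * c k = r`, so `x = ∑ k * c k`, and the summand becomes
`multinomial c * ∏ ((-s 1) ^ k * s (k + 2)) ^ c k`. Grouped by `m = ∑ c`, these are the
multinomial expansions of the coefficients of `K ^ m`, where
`K = ∑ (-s 1) ^ k * s (k + 2) * X ^ (k + 1)`, so `hFun s` is the coefficient sequence of
`(1 - K)⁻¹`; the recurrence is the coefficient form of `(1 - K)⁻¹ = 1 + (1 - K)⁻¹ * K`.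
-/

open Finset

/-- The combinatorial sum `h(r)` over integer partitions of `2r` into exactly `r` parts,
with `b i` the number of parts equal to `i`. -/
noncomputable def hFun (s : ℕ → ℂ) (r : ℕ) : ℂ :=
  ∑ b ∈ (Finset.Nat.antidiagonalTuple (r + 1) r).filter
      (fun b => ∑ i : Fin (r + 1), (i.1 + 1) * b i = 2 * r),
    (-1 : ℂ) ^ (b 0) * (∏ i : Fin (r + 1), (s (i.1 + 1)) ^ (b i)) *
      (Nat.factorial (r - b 0) : ℂ) /
      ∏ i ∈ Finset.univ.filter (fun i : Fin (r + 1) => 0 < i.1), (Nat.factorial (b i) : ℂ)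

open PowerSeries

section GeometricSeries

variable {k : Type*} [Field k] {K : k⟦X⟧}

theorem coeff_inv_one_sub_eq_coeff_geom_sum (hK : constantCoeff K = 0) (n : ℕ) :
    coeff n (1 - K)⁻¹ = coeff n (∑ m ∈ range (n + 1), K ^ m) := by
  have hinv : (1 - K)⁻¹ * (1 - K) = 1 := PowerSeries.inv_mul_cancel _ (by simp [hK])
  have hgeom : ∑ m ∈ range (n + 1), K ^ m = (1 - K)⁻¹ - (1 - K)⁻¹ * K ^ (n + 1) := by
    rw [← mul_one_sub, ← mul_neg_geom_sum, ← mul_assoc, hinv, one_mul]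
  have hdvd : X ^ (n + 1) ∣ (1 - K)⁻¹ * K ^ (n + 1) :=
    Dvd.dvd.mul_left (pow_dvd_pow_of_dvd (X_dvd_iff.mpr hK) _) _
  rw [hgeom, map_sub, X_pow_dvd_iff.mp hdvd n n.lt_succ_self, sub_zero]

theorem coeff_succ_inv_one_sub (hK : constantCoeff K = 0) (n : ℕ) :
    coeff (n + 1) (1 - K)⁻¹ =
      ∑ i ∈ range (n + 1), coeff (n + 1 - i) K * coeff i (1 - K)⁻¹ := by
  have hinv : (1 - K)⁻¹ * (1 - K) = 1 := PowerSeries.inv_mul_cancel _ (by simp [hK])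
  have hfix : (1 - K)⁻¹ = 1 + (1 - K)⁻¹ * K := by
    linear_combination hinv
  conv_lhs => rw [hfix]
  rw [map_add, coeff_one, if_neg n.succ_ne_zero, zero_add, coeff_mul,
    Nat.sum_antidiagonal_eq_sum_range_succ (fun i j => coeff i (1 - K)⁻¹ * coeff j K),
    sum_range_succ, Nat.sub_self, coeff_zero_eq_constantCoeff_apply, hK, mul_zero, add_zero]
  exact sum_congr rfl fun i _ => mul_comm _ _

end GeometricSeries

theorem coeff_eq_of_X_pow_dvd_sub {R : Type*} [Ring R] {f g : R⟦X⟧} {n : ℕ}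
    (h : X ^ (n + 1) ∣ f - g) :
    coeff n f = coeff n g :=
  sub_eq_zero.mp (by rw [← map_sub]; exact X_pow_dvd_iff.mp h n n.lt_succ_self)

theorem X_pow_succ_dvd_X_mul_mk_sub {R : Type*} [Ring R] (a : ℕ → R) (r : ℕ) :
    X ^ (r + 1) ∣ X * PowerSeries.mk a - ∑ k : Fin r, C (a k) * X ^ (k.1 + 1) := by
  refine X_pow_dvd_iff.mpr fun n hn => ?_
  rw [map_sub, map_sum, sub_eq_zero]
  simp_rw [coeff_C_mul_X_pow]
  rcases n with _ | n
  · simp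
  · rw [coeff_succ_X_mul, coeff_mk]
    have hnr : n < r := by omega
    rw [Fintype.sum_eq_single ⟨n, hnr⟩
      fun k hk => if_neg fun h => hk (Fin.ext (by simp; omega))]
    simp

theorem prod_C_mul_X_pow_pow {R ι : Type*} [CommSemiring R] [Fintype ι] (a : ι → R)
    (e c : ι → ℕ) :
    ∏ k, (C (a k) * X ^ e k) ^ c k = C (∏ k, a k ^ c k) * X ^ (∑ k, e k * c k) := by
  simp only [mul_pow, prod_mul_distrib, map_prod, map_pow, ← pow_mul, prod_pow_eq_pow_sum]

theorem coeff_X_mul_mk_pow {R : Type*} [CommRing R] (a : ℕ → R) (r m : ℕ) :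
    coeff r ((X * PowerSeries.mk a) ^ m) =
      ∑ c ∈ (Nat.antidiagonalTuple r m).filter (fun c => ∑ k, (k.1 + 1) * c k = r),
        (Nat.multinomial univ c : R) * ∏ k : Fin r, a k ^ c k := by
  rw [coeff_eq_of_X_pow_dvd_sub
      ((X_pow_succ_dvd_X_mul_mk_sub a r).trans (sub_dvd_pow_sub_pow _ _ m)),
    sum_pow_eq_sum_piAntidiag, piAntidiag_univ_fin_eq_antidiagonalTuple, map_sum, sum_filter]
  refine sum_congr rfl fun c _ => ?_
  rw [prod_C_mul_X_pow_pow, ← map_natCast (C (R := R)), ← mul_assoc, ← map_mul,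
    coeff_C_mul_X_pow]
  exact if_congr eq_comm rfl rfl

theorem cons_mem_hFun_index_iff {r x : ℕ} {c : Fin r → ℕ} :
    (Fin.cons x c : Fin (r + 1) → ℕ) ∈ (Finset.Nat.antidiagonalTuple (r + 1) r).filter
        (fun b => ∑ i : Fin (r + 1), (i.1 + 1) * b i = 2 * r) ↔
      x + ∑ k, c k = r ∧ ∑ k, (k.1 + 1) * c k = r := by
  simp only [mem_filter, Nat.mem_antidiagonalTuple, Fin.sum_univ_succ, Fin.cons_zero,
    Fin.cons_succ, Fin.val_zero, Fin.val_succ, add_mul, one_mul, sum_add_distrib]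
  omega

theorem hFun_summand_cons (s : ℕ → ℂ) {r x : ℕ} {c : Fin r → ℕ}
    (hx : x + ∑ k, c k = r) (hc : ∑ k, (k.1 + 1) * c k = r) :
    (-1 : ℂ) ^ (Fin.cons x c : Fin (r + 1) → ℕ) 0 *
        (∏ i : Fin (r + 1), s (i.1 + 1) ^ (Fin.cons x c : Fin (r + 1) → ℕ) i) *
        ((r - (Fin.cons x c : Fin (r + 1) → ℕ) 0).factorial : ℂ) /
        ∏ i ∈ univ.filter (fun i : Fin (r + 1) => 0 < i.1),
          (((Fin.cons x c : Fin (r + 1) → ℕ) i).factorial : ℂ) =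
      (Nat.multinomial univ c : ℂ) * ∏ k : Fin r, ((-s 1) ^ k.1 * s (k.1 + 2)) ^ c k := by
  have hx' : x = ∑ k, k.1 * c k := by
    simp only [add_mul, one_mul, sum_add_distrib] at hc
    omega
  have hfac :
      ((r - x).factorial : ℂ) = (∏ k, ((c k).factorial : ℂ)) * Nat.multinomial univ c := by
    rw [show r - x = ∑ k, c k by omega, ← Nat.multinomial_spec]; push_cast; rfl
  have hden : ∏ k, ((c k).factorial : ℂ) ≠ 0 :=
    prod_ne_zero_iff.mpr fun k _ => Nat.cast_ne_zero.mpr (Nat.factorial_ne_zero _)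
  have hweight : ∏ k : Fin r, ((-s 1) ^ k.1 * s (k.1 + 2)) ^ c k =
      (-1) ^ x * s 1 ^ x * ∏ k : Fin r, s (k.1 + 2) ^ c k := by
    rw [hx', ← neg_pow]
    simp only [mul_pow, prod_mul_distrib, ← pow_mul, prod_pow_eq_pow_sum]
  simp only [Fin.cons_zero, prod_filter, Fin.prod_univ_succ, Fin.cons_succ, Fin.val_zero,
    Fin.val_succ, lt_irrefl, if_false, Nat.succ_pos, if_true, one_mul, hfac, hweight]
  push_cast
  field_simp

theorem hFun_eq_sum_multinomial (s : ℕ → ℂ) (r : ℕ) :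
    hFun s r = ∑ m ∈ range (r + 1),
      ∑ c ∈ (Nat.antidiagonalTuple r m).filter (fun c => ∑ k, (k.1 + 1) * c k = r),
        (Nat.multinomial univ c : ℂ) * ∏ k : Fin r, ((-s 1) ^ k.1 * s (k.1 + 2)) ^ c k := by
  rw [hFun, ← sum_fiberwise_of_maps_to (g := fun b => r - b 0) (t := range (r + 1))
    fun b _ => mem_range.mpr (by omega)]
  refine sum_congr rfl fun m hm => ?_
  have hmr : m ≤ r := Nat.lt_succ_iff.mp (mem_range.mp hm)
  refine sum_nbij' Fin.tail (fun c => (Fin.cons (r - m) c : Fin (r + 1) → ℕ)) ?_ ?_ ?_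
    (fun c _ => Fin.tail_cons _ _) ?_
  · intro b hb
    induction b using Fin.consCases with | cons x c => ?_
    rw [mem_filter, cons_mem_hFun_index_iff, Fin.cons_zero] at hb
    simp only [Fin.tail_cons, mem_filter, Nat.mem_antidiagonalTuple]
    omega
  · intro c hc
    simp only [mem_filter, Nat.mem_antidiagonalTuple] at hc
    have : ∑ k, c k ≤ ∑ k, (k.1 + 1) * c k :=
      sum_le_sum fun k _ => Nat.le_mul_of_pos_left _ k.1.succ_pos
    rw [mem_filter, cons_mem_hFun_index_iff, Fin.cons_zero]
    omega
  · intro b hb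
    induction b using Fin.consCases with | cons x c => ?_
    rw [mem_filter, cons_mem_hFun_index_iff, Fin.cons_zero] at hb
    obtain ⟨⟨hx, -⟩, rfl⟩ := hb
    rw [Fin.tail_cons, Nat.sub_sub_self (by omega)]
  · intro b hb
    induction b using Fin.consCases with | cons x c => ?_
    rw [mem_filter, cons_mem_hFun_index_iff] at hb
    rw [Fin.tail_cons]
    exact hFun_summand_cons s hb.1.1 hb.1.2

noncomputable def hFunKernel (s : ℕ → ℂ) : ℂ⟦X⟧ :=
  X * PowerSeries.mk fun k => (-s 1) ^ k * s (k + 2)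

theorem constantCoeff_hFunKernel (s : ℕ → ℂ) : constantCoeff (hFunKernel s) = 0 := by
  simp [hFunKernel]

theorem coeff_succ_hFunKernel (s : ℕ → ℂ) (n : ℕ) :
    coeff (n + 1) (hFunKernel s) = (-s 1) ^ n * s (n + 2) := by
  rw [hFunKernel, coeff_succ_X_mul, coeff_mk]

theorem hFun_eq_coeff_inv_one_sub_hFunKernel (s : ℕ → ℂ) (r : ℕ) :
    hFun s r = coeff r (1 - hFunKernel s)⁻¹ := by
  rw [coeff_inv_one_sub_eq_coeff_geom_sum (constantCoeff_hFunKernel s), map_sum,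
    hFun_eq_sum_multinomial]
  simp only [hFunKernel, coeff_X_mul_mk_pow]

theorem hFun_zero_and_recurrence (s : ℕ → ℂ) (hs : s 1 ≠ 0) :
    hFun s 0 = 1 ∧
    ∀ ℓ : ℕ, ∑ i ∈ Finset.range (ℓ + 1),
        (-1 : ℂ) ^ i * s (ℓ - i + 2) / (s 1) ^ (i + 1) * hFun s i
      = (-1 : ℂ) ^ ℓ / (s 1) ^ (ℓ + 1) * hFun s (ℓ + 1) := by
  have hK := constantCoeff_hFunKernel s
  refine ⟨?_, fun ℓ => ?_⟩
  · rw [hFun_eq_coeff_inv_one_sub_hFunKernel, coeff_zero_eq_constantCoeff_apply,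
      constantCoeff_inv, map_sub, map_one, hK, sub_zero, inv_one]
  rw [hFun_eq_coeff_inv_one_sub_hFunKernel s (ℓ + 1), coeff_succ_inv_one_sub hK, mul_sum]
  refine sum_congr rfl fun i hi => ?_
  obtain ⟨j, rfl⟩ := Nat.exists_eq_add_of_le (mem_range_succ_iff.mp hi)
  rw [show i + j + 1 - i = j + 1 by omega, show i + j - i = j by omega, coeff_succ_hFunKernel,
    ← hFun_eq_coeff_inv_one_sub_hFunKernel, neg_pow, pow_add, pow_add]
  field_simp
  ring_nf
  rw [pow_mul', neg_one_sq, one_pow, mul_one]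
end

section
/- For $x > 0$ and any non-negative integer $\ell$, as $x \to \infty$ one has $\psi_\ell'(x) = \frac{\log^\ell x}{x} + O_\ell\left(\frac{\log^\ell x}{x^2}\right)$, where $\psi_\ell$ is the $\ell$-th generalized digamma function. -/
open Finset Filter Asymptotics

/-- The generalized digamma function `ψ_ℓ(x) = -γ_ℓ(x)`, minus the generalized
Stieltjes constant. -/
noncomputable def psiGen (k : ℕ) (x : ℝ) : ℝ :=
  - limUnder Filter.atTop (fun n : ℕ =>
      (∑ j ∈ Finset.range (n + 1), (Real.log (j + x)) ^ k / (j + x))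
        - (Real.log (n + x)) ^ (k + 1) / (k + 1))

open Set Topology

/-! With `f t = log t ^ ℓ / t` and its primitive `F t = log t ^ (ℓ + 1) / (ℓ + 1)`, the partial
sums defining `γ_ℓ x` telescope to `Σ_j δ_j x - F x` plus a vanishing term, where
`δ_j x = f (j + x) - (F (j + x + 1) - F (j + x))` is the error of the left rectangle rule for
`∫ f` over `[j + x, j + x + 1]`. Hence `ψ_ℓ = F - Σ_j δ_j` and `ψ_ℓ' - f = -Σ_j δ_j'`, where `δ_j'`
is the same error for `f'`. Once `log x ≥ 2ℓ`, `f` is decreasing and `f'` is negative and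
increasing, so the mean value theorem traps each error for `f'` between `0` and
`f' (j + x + 1) - f' (j + x)`; these telescope to `-f' x ≤ log x ^ ℓ / x ^ 2`. The same
monotonicity provides the summability needed to differentiate the series term by term. -/

lemma hasSum_sub_succ_of_antitone {u : ℕ → ℝ} {l : ℝ} (hu : Antitone u)
    (h : Tendsto u atTop (𝓝 l)) : HasSum (fun n => u n - u (n + 1)) (u 0 - l) := by
  rw [hasSum_iff_tendsto_nat_of_nonneg fun n => sub_nonneg.2 (hu n.le_succ)]
  simpa only [Finset.sum_range_sub'] using h.const_sub (u 0)

lemma antitoneOn_Ici_of_hasDerivAt_nonpos {g g' : ℝ → ℝ} {T : ℝ}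
    (hg : ∀ t ≥ T, HasDerivAt g (g' t) t) (hg' : ∀ t ≥ T, g' t ≤ 0) : AntitoneOn g (Ici T) :=
  antitoneOn_of_hasDerivWithinAt_nonpos (convex_Ici T)
    (fun t ht => (hg t ht).continuousAt.continuousWithinAt)
    (fun t ht => (hg t (interior_subset ht)).hasDerivWithinAt)
    (fun t ht => hg' t (interior_subset ht))

/-- For `φ` a primitive of `φ'`, the error `φ' a - ∫ t in a..a + 1, φ' t` of the left rectangle
rule at `a = j + x`. -/
noncomputable def eulerDefect (φ φ' : ℝ → ℝ) (x : ℝ) (j : ℕ) : ℝ :=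
  φ' (j + x) - (φ (j + x + 1) - φ (j + x))

lemma eulerDefect_neg (φ φ' : ℝ → ℝ) (x : ℝ) (j : ℕ) :
    eulerDefect (fun t => -φ t) (fun t => -φ' t) x j = -eulerDefect φ φ' x j := by
  simp only [eulerDefect]; ring

lemma hasDerivAt_eulerDefect {φ φ' φ'' : ℝ → ℝ} {T x : ℝ} (hφ : ∀ t ≥ T, HasDerivAt φ (φ' t) t)
    (hφ' : ∀ t ≥ T, HasDerivAt φ' (φ'' t) t) (hx : T ≤ x) (j : ℕ) :
    HasDerivAt (fun y => eulerDefect φ φ' y j) (eulerDefect φ' φ'' x j) x := by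
  have hT : T ≤ j + x := by linarith [j.cast_nonneg (α := ℝ)]
  exact ((hφ' _ hT).comp_const_add _ x).sub
    ((((hφ _ (by linarith)).comp_add_const _ 1).comp_const_add _ x).sub
      ((hφ _ hT).comp_const_add _ x))

section AntitoneDeriv

variable {φ φ' : ℝ → ℝ} {T : ℝ}

lemma deriv_add_one_le_sub_le_deriv (hφ : ∀ t ≥ T, HasDerivAt φ (φ' t) t)
    (hφ' : AntitoneOn φ' (Ici T)) {a : ℝ} (ha : T ≤ a) :
    φ' (a + 1) ≤ φ (a + 1) - φ a ∧ φ (a + 1) - φ a ≤ φ' a := by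
  obtain ⟨c, hc, hslope⟩ := exists_hasDerivAt_eq_slope φ φ' (lt_add_one a)
    (fun t ht => (hφ t (ha.trans ht.1)).continuousAt.continuousWithinAt)
    (fun t ht => hφ t (ha.trans ht.1.le))
  rw [add_sub_cancel_left, div_one] at hslope
  have hcT : c ∈ Ici T := ha.trans hc.1.le
  rw [← hslope]
  exact ⟨hφ' hcT (ha.trans (le_add_of_nonneg_right zero_le_one)) hc.2.le, hφ' ha hcT hc.1.le⟩

lemma nonneg_of_antitoneOn_of_tendsto_zero (hφ' : AntitoneOn φ' (Ici T))
    (hlim : Tendsto φ' atTop (𝓝 0)) {t : ℝ} (ht : T ≤ t) : 0 ≤ φ' t :=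
  le_of_tendsto hlim <| (eventually_ge_atTop t).mono fun _ hs => hφ' ht (ht.trans hs) hs

variable {x : ℝ}

lemma eulerDefect_nonneg_and_le (hφ : ∀ t ≥ T, HasDerivAt φ (φ' t) t)
    (hφ' : AntitoneOn φ' (Ici T)) (hx : T ≤ x) (j : ℕ) :
    0 ≤ eulerDefect φ φ' x j ∧ eulerDefect φ φ' x j ≤ φ' (j + x) - φ' (j + x + 1) := by
  have := deriv_add_one_le_sub_le_deriv hφ hφ' (a := j + x) (by linarith [j.cast_nonneg (α := ℝ)])
  unfold eulerDefect
  constructor <;> linarith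

lemma hasSum_deriv_sub_succ (hφ' : AntitoneOn φ' (Ici T)) (hlim : Tendsto φ' atTop (𝓝 0))
    (hx : T ≤ x) : HasSum (fun j : ℕ => φ' (j + x) - φ' (j + x + 1)) (φ' x) := by
  have hanti : Antitone fun j : ℕ => φ' (j + x) := fun i j hij =>
    hφ' (by simp only [Set.mem_Ici]; linarith [i.cast_nonneg (α := ℝ)])
      (by simp only [Set.mem_Ici]; linarith [j.cast_nonneg (α := ℝ)]) (by gcongr)
  have := hasSum_sub_succ_of_antitone hanti
    (hlim.comp (tendsto_atTop_add_const_right _ x tendsto_natCast_atTop_atTop))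
  simpa [add_right_comm] using this

lemma summable_eulerDefect (hφ : ∀ t ≥ T, HasDerivAt φ (φ' t) t)
    (hφ' : AntitoneOn φ' (Ici T)) (hlim : Tendsto φ' atTop (𝓝 0)) (hx : T ≤ x) :
    Summable (eulerDefect φ φ' x) :=
  (hasSum_deriv_sub_succ hφ' hlim hx).summable.of_nonneg_of_le
    (fun j => (eulerDefect_nonneg_and_le hφ hφ' hx j).1)
    (fun j => (eulerDefect_nonneg_and_le hφ hφ' hx j).2)

lemma tsum_eulerDefect_le (hφ : ∀ t ≥ T, HasDerivAt φ (φ' t) t)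
    (hφ' : AntitoneOn φ' (Ici T)) (hlim : Tendsto φ' atTop (𝓝 0)) (hx : T ≤ x) :
    ∑' j, eulerDefect φ φ' x j ≤ φ' x :=
  hasSum_le (fun j => (eulerDefect_nonneg_and_le hφ hφ' hx j).2)
    (summable_eulerDefect hφ hφ' hlim hx).hasSum (hasSum_deriv_sub_succ hφ' hlim hx)

lemma summable_deriv_natCast_add (hφ : ∀ t ≥ T, HasDerivAt φ (φ' t) t)
    (hφ' : AntitoneOn φ' (Ici T)) (hlim : Tendsto φ' atTop (𝓝 0)) {l : ℝ}
    (hφlim : Tendsto φ atTop (𝓝 l)) (hx : T ≤ x) : Summable fun j : ℕ => φ' (j + x) := by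
  have hanti : Antitone fun j : ℕ => -φ (j + x) := antitone_nat_of_succ_le fun j => by
    have hjT : T ≤ j + x := by linarith [j.cast_nonneg (α := ℝ)]
    have hslope := (deriv_add_one_le_sub_le_deriv hφ hφ' hjT).1
    have hderiv := nonneg_of_antitoneOn_of_tendsto_zero hφ' hlim
      (hjT.trans (le_add_of_nonneg_right zero_le_one))
    rw [Nat.cast_succ, add_right_comm]
    linarith
  have htel := (hasSum_sub_succ_of_antitone hanti
    ((hφlim.comp (tendsto_atTop_add_const_right _ x tendsto_natCast_atTop_atTop)).neg)).summable
  refine ((summable_eulerDefect hφ hφ' hlim hx).add htel).congr fun j => ?_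
  simp only [eulerDefect, Nat.cast_succ, add_right_comm _ (1 : ℝ)]
  ring

end AntitoneDeriv

noncomputable def logPowDiv (k : ℕ) (t : ℝ) : ℝ := Real.log t ^ k / t

noncomputable def logPowDivPrimitive (k : ℕ) (t : ℝ) : ℝ := Real.log t ^ (k + 1) / (k + 1)

noncomputable def logPowDivDeriv (k : ℕ) (t : ℝ) : ℝ :=
  (k * Real.log t ^ (k - 1) - Real.log t ^ k) / t ^ 2

section LogPowDiv

variable (k : ℕ) {t : ℝ}

lemma hasDerivAt_logPowDivPrimitive (ht : 0 < t) :
    HasDerivAt (logPowDivPrimitive k) (logPowDiv k t) t := by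
  refine (((Real.hasDerivAt_log ht.ne').pow (k + 1)).div_const ((k : ℝ) + 1)).congr_deriv ?_
  rw [logPowDiv, Nat.add_sub_cancel]
  field_simp
  push_cast
  ring

lemma hasDerivAt_logPowDiv (ht : 0 < t) : HasDerivAt (logPowDiv k) (logPowDivDeriv k t) t := by
  refine (((Real.hasDerivAt_log ht.ne').pow k).div (hasDerivAt_id t) ht.ne').congr_deriv ?_
  simp only [logPowDivDeriv, id, Pi.pow_apply]
  field_simp

lemma hasDerivAt_logPowDivDeriv (ht : 0 < t) :
    HasDerivAt (logPowDivDeriv k)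
      ((k * (k - 1 : ℕ) * Real.log t ^ (k - 2) - 3 * k * Real.log t ^ (k - 1)
        + 2 * Real.log t ^ k) / t ^ 3) t := by
  have hlog := Real.hasDerivAt_log ht.ne'
  refine ((((hlog.pow (k - 1)).const_mul (k : ℝ)).sub (hlog.pow k)).div
    (hasDerivAt_pow 2 t) (by positivity)).congr_deriv ?_
  simp only [Nat.sub_sub, Pi.pow_apply, Pi.sub_apply]
  field_simp
  ring

lemma natCast_mul_pow_pred_le_pow {a L : ℝ} (ha : 0 ≤ a) (hL : a * k ≤ L) :
    a * k * L ^ (k - 1) ≤ L ^ k := by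
  rcases k with _ | m
  · simp
  · have hL0 : 0 ≤ L := le_trans (by positivity) hL
    rw [Nat.add_sub_cancel, pow_succ']
    exact mul_le_mul_of_nonneg_right hL (pow_nonneg hL0 m)

variable {k} in
lemma pos_and_two_mul_le_log (ht : Real.exp (2 * k) ≤ t) : 0 < t ∧ 2 * k ≤ Real.log t :=
  ⟨(Real.exp_pos _).trans_le ht, (Real.le_log_iff_exp_le ((Real.exp_pos _).trans_le ht)).2 ht⟩

lemma hasDerivAt_neg_logPowDiv : ∀ t ≥ Real.exp (2 * k),
    HasDerivAt (fun t => -logPowDiv k t) (-logPowDivDeriv k t) t :=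
  fun _ ht => (hasDerivAt_logPowDiv k (pos_and_two_mul_le_log ht).1).neg

lemma antitoneOn_logPowDiv : AntitoneOn (logPowDiv k) (Ici (Real.exp (2 * k))) := by
  refine antitoneOn_Ici_of_hasDerivAt_nonpos
    (fun t ht => hasDerivAt_logPowDiv k (pos_and_two_mul_le_log ht).1) fun t ht => ?_
  obtain ⟨ht0, hL⟩ := pos_and_two_mul_le_log ht
  have := natCast_mul_pow_pred_le_pow k (a := 1) (L := Real.log t) zero_le_one
    (by linarith [k.cast_nonneg (α := ℝ)])
  exact div_nonpos_of_nonpos_of_nonneg (by linarith) (by positivity)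

lemma antitoneOn_neg_logPowDivDeriv :
    AntitoneOn (fun t => -logPowDivDeriv k t) (Ici (Real.exp (2 * k))) := by
  refine antitoneOn_Ici_of_hasDerivAt_nonpos
    (fun t ht => (hasDerivAt_logPowDivDeriv k (pos_and_two_mul_le_log ht).1).neg) fun t ht => ?_
  obtain ⟨ht0, hL⟩ := pos_and_two_mul_le_log ht
  have hL0 : 0 ≤ Real.log t := by linarith [k.cast_nonneg (α := ℝ)]
  have := natCast_mul_pow_pred_le_pow k (a := 3 / 2) (L := Real.log t) (by norm_num)
    (by linarith)
  rw [neg_nonpos]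
  refine div_nonneg ?_ (by positivity)
  linarith [show 0 ≤ (k : ℝ) * (k - 1 : ℕ) * Real.log t ^ (k - 2) by positivity]

lemma tendsto_logPowDiv : Tendsto (logPowDiv k) atTop (𝓝 0) := by
  unfold logPowDiv
  simpa using Real.tendsto_pow_log_div_mul_add_atTop 1 0 k one_ne_zero

lemma tendsto_neg_logPowDivDeriv : Tendsto (fun t => -logPowDivDeriv k t) atTop (𝓝 0) := by
  have := ((tendsto_logPowDiv (k - 1)).const_mul (k : ℝ)).sub (tendsto_logPowDiv k)
  rw [← neg_zero]
  refine (this.div_atTop tendsto_id).neg.congr fun t => ?_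
  simp only [logPowDiv, logPowDivDeriv, id]
  ring

variable {k} in
lemma neg_logPowDivDeriv_le (hL : 0 ≤ Real.log t) :
    -logPowDivDeriv k t ≤ Real.log t ^ k / t ^ 2 := by
  rw [logPowDivDeriv, ← neg_div]
  gcongr
  linarith [show 0 ≤ (k : ℝ) * Real.log t ^ (k - 1) by positivity]

end LogPowDiv

section PsiGen

variable (k : ℕ) {x : ℝ}

lemma psiGen_eq_sub_tsum (hx : Real.exp (2 * k) ≤ x) :
    psiGen k x = logPowDivPrimitive k x
      - ∑' j, eulerDefect (logPowDivPrimitive k) (logPowDiv k) x j := by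
  have hsum := (summable_eulerDefect (fun t ht => hasDerivAt_logPowDivPrimitive k
    (pos_and_two_mul_le_log ht).1) (antitoneOn_logPowDiv k) (tendsto_logPowDiv k) hx).hasSum
  have hpartial : ∀ n : ℕ, (∑ j ∈ Finset.range (n + 1), Real.log (j + x) ^ k / (j + x))
      - Real.log (n + x) ^ (k + 1) / (k + 1)
      = ∑ j ∈ Finset.range n, eulerDefect (logPowDivPrimitive k) (logPowDiv k) x j
        + logPowDiv k (n + x) - logPowDivPrimitive k x := by
    intro n
    induction n with
    | zero => simp [logPowDiv, logPowDivPrimitive]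
    | succ n ih =>
      rw [Finset.sum_range_succ (fun j : ℕ => Real.log (j + x) ^ k / (j + x)) (n + 1),
        Finset.sum_range_succ (eulerDefect _ _ x) n, Nat.cast_succ, add_right_comm (n : ℝ) 1 x]
      simp only [eulerDefect, logPowDiv, logPowDivPrimitive] at ih ⊢
      linear_combination ih
  have hlim := (hsum.tendsto_sum_nat.add ((tendsto_logPowDiv k).comp
    (tendsto_atTop_add_const_right _ x tendsto_natCast_atTop_atTop))).sub_const
    (logPowDivPrimitive k x)
  rw [add_zero] at hlim
  rw [psiGen, (hlim.congr fun n => (hpartial n).symm).limUnder_eq]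
  ring

lemma norm_eulerDefect_logPowDiv_le (hx : Real.exp (2 * k) ≤ x) (j : ℕ) :
    ‖eulerDefect (logPowDiv k) (logPowDivDeriv k) x j‖
      ≤ -logPowDivDeriv k (j + Real.exp (2 * k)) := by
  have hanti := antitoneOn_neg_logPowDivDeriv k
  have hjx : Real.exp (2 * k) ≤ j + x := by linarith [j.cast_nonneg (α := ℝ)]
  obtain ⟨h0, hle⟩ := eulerDefect_nonneg_and_le (hasDerivAt_neg_logPowDiv k) hanti hx j
  have hnext := nonneg_of_antitoneOn_of_tendsto_zero hanti (tendsto_neg_logPowDivDeriv k)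
    (t := j + x + 1) (by linarith)
  have hshift : -logPowDivDeriv k (j + x) ≤ -logPowDivDeriv k (j + Real.exp (2 * k)) :=
    hanti (by simp only [Set.mem_Ici]; linarith [j.cast_nonneg (α := ℝ)]) hjx (by linarith)
  rw [eulerDefect_neg] at h0 hle
  rw [Real.norm_eq_abs, abs_of_nonpos (by linarith)]
  linarith

lemma hasDerivAt_psiGen (hx : Real.exp (2 * k) < x) :
    HasDerivAt (psiGen k)
      (logPowDiv k x - ∑' j, eulerDefect (logPowDiv k) (logPowDivDeriv k) x j) x := by
  have hF : ∀ t ≥ Real.exp (2 * k), HasDerivAt (logPowDivPrimitive k) (logPowDiv k t) t :=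
    fun t ht => hasDerivAt_logPowDivPrimitive k (pos_and_two_mul_le_log ht).1
  have hf : ∀ t ≥ Real.exp (2 * k), HasDerivAt (logPowDiv k) (logPowDivDeriv k t) t :=
    fun t ht => hasDerivAt_logPowDiv k (pos_and_two_mul_le_log ht).1
  have hbound : Summable fun j : ℕ => -logPowDivDeriv k (j + Real.exp (2 * k)) :=
    summable_deriv_natCast_add (φ := fun t => -logPowDiv k t) (φ' := fun t => -logPowDivDeriv k t)
      (hasDerivAt_neg_logPowDiv k) (antitoneOn_neg_logPowDivDeriv k)
      (tendsto_neg_logPowDivDeriv k) (l := 0) (by simpa using (tendsto_logPowDiv k).neg) le_rfl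
  have htsum := hasDerivAt_tsum_of_isPreconnected hbound isOpen_Ioi isPreconnected_Ioi
    (fun j y hy => hasDerivAt_eulerDefect hF hf (le_of_lt hy) j)
    (fun j y hy => norm_eulerDefect_logPowDiv_le k (le_of_lt hy) j) hx
    (summable_eulerDefect hF (antitoneOn_logPowDiv k) (tendsto_logPowDiv k) hx.le) hx
  exact ((hF x hx.le).sub htsum).congr_of_eventuallyEq <|
    eventually_of_mem (Ioi_mem_nhds hx) fun y hy => psiGen_eq_sub_tsum k (le_of_lt hy)

lemma deriv_psiGen_sub_mem_Icc (hx : Real.exp (2 * k) < x) :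
    deriv (psiGen k) x - Real.log x ^ k / x ∈ Icc 0 (Real.log x ^ k / x ^ 2) := by
  have hanti := antitoneOn_neg_logPowDivDeriv k
  have hdefect : deriv (psiGen k) x - Real.log x ^ k / x
      = ∑' j, eulerDefect (fun t => -logPowDiv k t) (fun t => -logPowDivDeriv k t) x j := by
    rw [(hasDerivAt_psiGen k hx).deriv, logPowDiv]
    simp only [eulerDefect_neg, tsum_neg]
    ring
  have hL : 0 ≤ Real.log x := by
    linarith [(pos_and_two_mul_le_log hx.le).2, k.cast_nonneg (α := ℝ)]
  rw [hdefect]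
  exact ⟨tsum_nonneg fun j =>
      (eulerDefect_nonneg_and_le (hasDerivAt_neg_logPowDiv k) hanti hx.le j).1,
    (tsum_eulerDefect_le (hasDerivAt_neg_logPowDiv k) hanti (tendsto_neg_logPowDivDeriv k)
      hx.le).trans (neg_logPowDivDeriv_le hL)⟩

end PsiGen

theorem psiGen_deriv_asymptotic (ℓ : ℕ) :
    (fun x : ℝ => deriv (psiGen ℓ) x - (Real.log x) ^ ℓ / x)
      =O[Filter.atTop] (fun x : ℝ => (Real.log x) ^ ℓ / x ^ 2) := by
  refine IsBigO.of_bound 1 ?_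
  filter_upwards [eventually_gt_atTop (Real.exp (2 * ℓ))] with x hx
  obtain ⟨hlower, hupper⟩ := deriv_psiGen_sub_mem_Icc ℓ hx
  rw [one_mul, Real.norm_of_nonneg hlower, Real.norm_of_nonneg (hlower.trans hupper)]
  exact hupper
end
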